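/- arXiv:1503.07187 — 2 statements merged into one kernel-verified Lean document; each statement's English description precedes it below -/
import Mathlib

section
/- The derivative of the generalized Mittag-Leffler function satisfies d/dx E_{α,β}(x) = (1/α) E_{α,α+β-1}(x) + ((1-β)/α) E_{α,α+β}(x) for α > 0, β > 0 and x > 0 (assuming α+β-1 > 0). -/
open Real Filter Set

/-- Key growth lemma: one step of size `α` multiplies `Γ` by at least `M`, for `z` large. -/
lemma gamma_step (α z M : ℝ) (hα : 0 < α) (hM : 0 < M) (hz2 : 2 ≤ z) (hαz : α ≤ z)
    (hMz : M ≤ z) (hlog : Real.log (2 * M) ≤ α * Real.log z) :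
    M * Real.Gamma z ≤ Real.Gamma (z + α) := by
  have hz0 : 0 < z := by linarith
  have hGz : 0 < Real.Gamma z := Real.Gamma_pos_of_pos hz0
  rcases le_or_gt 1 α with h1 | h1
  · -- α ≥ 1 : Γ(z+α) ≥ Γ(z+1) = z Γ(z) ≥ M Γ(z)
    have h2 : Real.Gamma (z + 1) ≤ Real.Gamma (z + α) := by
      apply Real.Gamma_strictMonoOn_Ici.monotoneOn
        (by simp only [mem_Ici]; linarith) (by simp only [mem_Ici]; linarith) (by linarith)
    rw [Real.Gamma_add_one hz0.ne'] at h2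
    nlinarith
  · -- 0 < α < 1 : log-convexity
    have hGza : 0 < Real.Gamma (z + α) := Real.Gamma_pos_of_pos (by linarith)
    have hconv := Real.convexOn_log_Gamma.2
      (show z + α ∈ Ioi (0:ℝ) by simp only [mem_Ioi]; linarith)
      (show z + α + 1 ∈ Ioi (0:ℝ) by simp only [mem_Ioi]; linarith)
      (le_of_lt hα) (by linarith : (0:ℝ) ≤ 1 - α) (by ring)
    have hcomb : α • (z + α) + (1 - α) • (z + α + 1) = z + 1 := by
      simp only [smul_eq_mul]; ring
    rw [hcomb] at hconv
    simp only [Function.comp_apply, smul_eq_mul] at hconv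
    have e1 : Real.Gamma (z + α + 1) = (z + α) * Real.Gamma (z + α) :=
      Real.Gamma_add_one (by linarith : z + α ≠ 0)
    have e2 : Real.Gamma (z + 1) = z * Real.Gamma z := Real.Gamma_add_one hz0.ne'
    rw [e1, e2, Real.log_mul hz0.ne' hGz.ne',
      Real.log_mul (by linarith : z + α ≠ 0) hGza.ne'] at hconv
    have key : Real.log (M * Real.Gamma z) ≤ Real.log (Real.Gamma (z + α)) := by
      rw [Real.log_mul hM.ne' hGz.ne']
      have hlzα : Real.log (z + α) ≤ Real.log 2 + Real.log z := by
        rw [← Real.log_mul (by norm_num) hz0.ne']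
        exact Real.log_le_log (by linarith) (by linarith)
      have hl2M : Real.log (2 * M) = Real.log 2 + Real.log M :=
        Real.log_mul (by norm_num) hM.ne'
      have hlz : 0 ≤ Real.log z := Real.log_nonneg (by linarith)
      have hl2 : 0 ≤ Real.log 2 := Real.log_nonneg (by norm_num)
      nlinarith [hconv]
    calc M * Real.Gamma z = Real.exp (Real.log (M * Real.Gamma z)) :=
          (Real.exp_log (by positivity)).symm
      _ ≤ Real.exp (Real.log (Real.Gamma (z + α))) := Real.exp_le_exp.mpr key
      _ = Real.Gamma (z + α) := Real.exp_log hGza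

/-- Eventual ratio growth along `k ↦ β + α k`. -/
lemma gamma_ratio_eventually (α β M : ℝ) (hα : 0 < α) (hβ : 0 < β) (hM : 0 < M) :
    ∀ᶠ k : ℕ in atTop, M * Real.Gamma (β + α * k) ≤ Real.Gamma (β + α * (k + 1)) := by
  have hz : Tendsto (fun k : ℕ => β + α * k) atTop atTop := by
    apply tendsto_atTop_add_const_left
    exact (tendsto_natCast_atTop_atTop (R := ℝ)).const_mul_atTop hα
  have hlog : Tendsto (fun k : ℕ => α * Real.log (β + α * k)) atTop atTop :=
    ((Real.tendsto_log_atTop.comp hz).const_mul_atTop hα)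
  filter_upwards [hz.eventually_ge_atTop 2, hz.eventually_ge_atTop α,
    hz.eventually_ge_atTop M, hlog.eventually_ge_atTop (Real.log (2 * M))] with k h2 hαk hMk hlk
  have h : β + α * ((k : ℝ) + 1) = (β + α * k) + α := by ring
  rw [h]
  exact gamma_step α (β + α * k) M hα hM h2 hαk hMk hlk

/-- Summability of the (shifted) Mittag-Leffler type series with a linear factor. -/
lemma summable_ml_aux (α β r : ℝ) (hα : 0 < α) (hβ : 0 < β) (hr : 0 < r) :
    Summable (fun k : ℕ => ((k : ℝ) + 1) * r ^ k / Real.Gamma (β + α * k)) := by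
  apply summable_of_ratio_norm_eventually_le (r := 1/2) (by norm_num)
  filter_upwards [gamma_ratio_eventually α β (4 * r) hα hβ (by linarith)] with k hk
  have hk' : (0:ℝ) < β + α * k := by positivity
  have hG1 : 0 < Real.Gamma (β + α * k) := Real.Gamma_pos_of_pos hk'
  have hG2 : 0 < Real.Gamma (β + α * (k + 1)) :=
    Real.Gamma_pos_of_pos (by positivity)
  have hknn : (0:ℝ) ≤ (k:ℝ) := Nat.cast_nonneg k
  have hrk : (0:ℝ) < r ^ k := by positivity
  rw [Real.norm_eq_abs, Real.norm_eq_abs, abs_of_pos (by push_cast; positivity),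
    abs_of_pos (by positivity)]
  push_cast
  rw [div_le_iff₀ hG2]
  calc ((k:ℝ) + 1 + 1) * r ^ (k + 1)
      = ((k:ℝ) + 2) * r * r ^ k := by rw [pow_succ]; ring
    _ ≤ 2 * r * (((k:ℝ) + 1) * r ^ k) := by nlinarith [mul_nonneg (mul_nonneg hr.le hrk.le) hknn]
    _ = 1 / 2 * (((k:ℝ) + 1) * r ^ k / Real.Gamma (β + α * k)) * (4 * r * Real.Gamma (β + α * k)) := by
        field_simp
        ring
    _ ≤ 1 / 2 * (((k:ℝ) + 1) * r ^ k / Real.Gamma (β + α * k)) * Real.Gamma (β + α * (k + 1)) := by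
        apply mul_le_mul_of_nonneg_left hk (by positivity)

lemma summable_ml (α β r : ℝ) (hα : 0 < α) (hβ : 0 < β) (hr : 0 < r) :
    Summable (fun k : ℕ => r ^ k / Real.Gamma (β + α * k)) := by
  refine Summable.of_nonneg_of_le (fun k => by positivity)
    (fun k => ?_) (summable_ml_aux α β r hα hβ hr)
  have hG : 0 < Real.Gamma (β + α * k) := Real.Gamma_pos_of_pos (by positivity)
  have h1 : r ^ k ≤ ((k:ℝ) + 1) * r ^ k := by
    nlinarith [pow_nonneg hr.le k, Nat.cast_nonneg (α := ℝ) k]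
  exact div_le_div_of_nonneg_right h1 hG.le

/-- The generalized (two-parameter) Mittag-Leffler function. -/
noncomputable def mittagLeffler (α β lam : ℝ) : ℝ :=
  ∑' k : ℕ, lam ^ k / Real.Gamma (β + α * k)

theorem mittagLeffler_deriv (α β x : ℝ) (hα : 0 < α) (hβ : 0 < β) (hβ' : 0 < α + β - 1)
    (hx : 0 < x) :
    deriv (mittagLeffler α β) x
      = (1 / α) * mittagLeffler α (α + β - 1) x + ((1 - β) / α) * mittagLeffler α (α + β) x := by
  -- term functions and their derivatives
  set g : ℕ → ℝ → ℝ := fun k y => y ^ k / Real.Gamma (β + α * k) with hg_def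
  set g' : ℕ → ℝ → ℝ := fun k y => (k : ℝ) * y ^ (k - 1) / Real.Gamma (β + α * k) with hg'_def
  set u : ℕ → ℝ := fun k => ((k : ℝ) + 1) * (x + 1) ^ k / Real.Gamma (β + α * k) with hu_def
  have hx1 : (0:ℝ) < x + 1 := by linarith
  have hu : Summable u := summable_ml_aux α β (x + 1) hα hβ hx1
  have ht : IsOpen (Ioo (0:ℝ) (x + 1)) := isOpen_Ioo
  have h't : IsPreconnected (Ioo (0:ℝ) (x + 1)) := isPreconnected_Ioo
  have hxmem : x ∈ Ioo (0:ℝ) (x + 1) := ⟨hx, by linarith⟩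
  have hgderiv : ∀ k : ℕ, ∀ y : ℝ, y ∈ Ioo (0:ℝ) (x + 1) → HasDerivAt (g k) (g' k y) y := by
    intro k y _
    simpa [hg_def, hg'_def] using (hasDerivAt_pow k y).div_const (Real.Gamma (β + α * k))
  have hbound : ∀ k : ℕ, ∀ y : ℝ, y ∈ Ioo (0:ℝ) (x + 1) → ‖g' k y‖ ≤ u k := by
    intro k y hy
    have hG : 0 < Real.Gamma (β + α * k) := Real.Gamma_pos_of_pos (by positivity)
    have hy0 : (0:ℝ) ≤ y := hy.1.le
    have hyx : y ≤ x + 1 := hy.2.le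
    have h1 : y ^ (k - 1) ≤ (x + 1) ^ (k - 1) := pow_le_pow_left₀ hy0 hyx _
    have h2 : (x + 1) ^ (k - 1) ≤ (x + 1) ^ k :=
      pow_le_pow_right₀ (by linarith) (Nat.sub_le k 1)
    have h3 : (0:ℝ) ≤ (k:ℝ) := Nat.cast_nonneg k
    rw [hg'_def, Real.norm_eq_abs, abs_of_nonneg (by positivity)]
    rw [hu_def]
    apply div_le_div_of_nonneg_right ?_ hG.le
    have : (k:ℝ) * y ^ (k - 1) ≤ (k:ℝ) * (x + 1) ^ k :=
      mul_le_mul_of_nonneg_left (h1.trans h2) h3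
    nlinarith [pow_nonneg (le_of_lt hx1) k]
  have hg0 : Summable fun k => g k x := summable_ml α β x hα hβ hx
  have hmain : HasDerivAt (fun z => ∑' k, g k z) (∑' k, g' k x) x :=
    hasDerivAt_tsum_of_isPreconnected hu ht h't hgderiv hbound hxmem hg0 hxmem
  have hml : mittagLeffler α β = fun z => ∑' k, g k z := by
    funext z; simp [mittagLeffler, hg_def]
  rw [hml, hmain.deriv]
  -- the sum of derivatives, reindexed
  have hsum : Summable fun k => g' k x := by
    refine hu.of_nonneg_of_le (fun k => ?_) (fun k => ?_)
    · simp only [hg'_def]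
      have hG : 0 < Real.Gamma (β + α * k) := Real.Gamma_pos_of_pos (by positivity)
      positivity
    · exact (le_abs_self _).trans (by simpa [Real.norm_eq_abs] using hbound k x hxmem)
  have hzero : g' 0 x = 0 := by simp [hg'_def]
  rw [Summable.tsum_eq_zero_add hsum, hzero, zero_add]
  -- summability of the two right-hand series
  have hs1 : Summable (fun k : ℕ => x ^ k / Real.Gamma (α + β - 1 + α * k)) :=
    summable_ml α (α + β - 1) x hα hβ' hx
  have hs2 : Summable (fun k : ℕ => x ^ k / Real.Gamma (α + β + α * k)) :=
    summable_ml α (α + β) x hα (by linarith) hx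
  have hrhs : (1 / α) * mittagLeffler α (α + β - 1) x
      + ((1 - β) / α) * mittagLeffler α (α + β) x
      = ∑' k : ℕ, ((1 / α) * (x ^ k / Real.Gamma (α + β - 1 + α * k))
          + ((1 - β) / α) * (x ^ k / Real.Gamma (α + β + α * k))) := by
    rw [mittagLeffler, mittagLeffler, ← tsum_mul_left, ← tsum_mul_left,
      Summable.tsum_add (hs1.mul_left _) (hs2.mul_left _)]
  rw [hrhs]
  apply tsum_congr
  intro k
  -- per-term identity
  have hw : (0:ℝ) < α + β - 1 + α * k := by positivity
  have hΓw : 0 < Real.Gamma (α + β - 1 + α * k) := Real.Gamma_pos_of_pos hw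
  have e1 : Real.Gamma (α + β + α * k) = (α + β - 1 + α * k) * Real.Gamma (α + β - 1 + α * k) := by
    rw [show α + β + α * (k:ℝ) = (α + β - 1 + α * k) + 1 by ring,
      Real.Gamma_add_one hw.ne']
  have e2 : g' (k + 1) x = ((k:ℝ) + 1) * x ^ k / ((α + β - 1 + α * k)
      * Real.Gamma (α + β - 1 + α * k)) := by
    simp only [hg'_def, Nat.add_sub_cancel]
    push_cast
    rw [show β + α * ((k:ℝ) + 1) = (α + β - 1 + α * k) + 1 by ring,
      Real.Gamma_add_one hw.ne']
  rw [e2, e1]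
  field_simp
  ring
end

section
/- For any n ∈ ℕ, α, β > 0 and λ > 0, the n-th raw moment of the generalized fractional Poisson distribution equals (1/E_{α,β}(λ)) · ∑_{j=0}^n S(n,j) λ^j E^{(j)}_{α,β}(λ), where E^{(j)} is the j-th derivative and S(n,j) are Stirling numbers of the second kind. -/
/-- Stirling numbers of the second kind. -/
def stirling2 : ℕ → ℕ → ℕ
  | 0, 0 => 1
  | 0, _ + 1 => 0
  | _ + 1, 0 => 0
  | n + 1, j + 1 => (j + 1) * stirling2 n (j + 1) + stirling2 n j

/-!
Write `E_{α,β}(x) = ∑ aₖ xᵏ` with `aₖ = 1 / Γ(β + αk)`. Log-convexity of `Γ` gives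
`Γ(x + α) / Γ(x) ≥ (x - 1)^α → ∞`, so by the ratio test the series converges for every `x` and may
be differentiated termwise: `xʲ E^{(j)}(x) = ∑ₖ k(k-1)⋯(k-j+1) aₖ xᵏ`. Summing against `S(n, j)`
and using `kⁿ = ∑ⱼ S(n, j) k(k-1)⋯(k-j+1)` termwise yields `∑ₖ kⁿ aₖ xᵏ`, the numerator of the
moment.
-/

open Filter Finset Real

namespace Nat

theorem self_mul_descFactorial (m j : ℕ) :
    m * m.descFactorial j = m.descFactorial (j + 1) + j * m.descFactorial j := by
  rcases le_or_gt j m with h | h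
  · rw [descFactorial_succ, ← Nat.add_mul, Nat.sub_add_cancel h]
  · simp [descFactorial_of_lt h]

theorem sum_stirlingSecond_mul_descFactorial (n m : ℕ) :
    ∑ j ∈ range (n + 1), stirlingSecond n j * m.descFactorial j = m ^ n := by
  induction n with
  | zero => simp
  | succ n ih =>
    have hshift : ∑ j ∈ range (n + 1), (j + 1) * stirlingSecond n (j + 1) * m.descFactorial (j + 1)
        = ∑ j ∈ range (n + 1), j * stirlingSecond n j * m.descFactorial j := by
      rw [sum_range_succ, stirlingSecond_eq_zero_of_lt n.lt_succ_self,
        sum_range_succ' (fun j => j * stirlingSecond n j * m.descFactorial j)]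
      simp
    calc ∑ j ∈ range (n + 2), stirlingSecond (n + 1) j * m.descFactorial j
        = ∑ j ∈ range (n + 1), ((j + 1) * stirlingSecond n (j + 1) * m.descFactorial (j + 1)
            + stirlingSecond n j * m.descFactorial (j + 1)) := by
          simp only [sum_range_succ' _ (n + 1), stirlingSecond_succ_succ, stirlingSecond_succ_zero,
            Nat.add_mul, zero_mul, add_zero]
      _ = ∑ j ∈ range (n + 1), stirlingSecond n j * (m * m.descFactorial j) := by
          rw [sum_add_distrib, hshift, add_comm, ← sum_add_distrib]
          refine sum_congr rfl fun j _ => ?_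
          rw [self_mul_descFactorial]
          ring
      _ = m ^ (n + 1) := by
          rw [pow_succ', ← ih, mul_sum]
          exact sum_congr rfl fun j _ => by ring

end Nat

theorem stirling2_eq_stirlingSecond : ∀ n j, stirling2 n j = Nat.stirlingSecond n j
  | 0, 0 => rfl
  | 0, _ + 1 => rfl
  | _ + 1, 0 => rfl
  | n + 1, j + 1 => by
    rw [stirling2, Nat.stirlingSecond_succ_succ, stirling2_eq_stirlingSecond n (j + 1),
      stirling2_eq_stirlingSecond n j]

namespace Real

/-- The secant slope of `log ∘ Γ` on `[x, x + a]` dominates the one on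
`[x - 1, x]`, which is `log (x - 1)`. -/
theorem rpow_le_Gamma_add_div_Gamma {x a : ℝ} (hx : 1 < x) (ha : 0 < a) :
    (x - 1) ^ a ≤ Gamma (x + a) / Gamma x := by
  have hx₁ : 0 < x - 1 := by linarith
  have hΓx₁ := Gamma_pos_of_pos hx₁
  have hΓx := Gamma_pos_of_pos (hx₁.trans (sub_one_lt x))
  have hΓxa := Gamma_pos_of_pos (show 0 < x + a by linarith)
  have hslope := convexOn_log_Gamma.slope_mono_adjacent (x := x - 1) (y := x) (z := x + a)
    (Set.mem_Ioi.2 hx₁) (Set.mem_Ioi.2 (by linarith)) (sub_one_lt x) (lt_add_of_pos_right x ha)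
  have hrec : Gamma x = (x - 1) * Gamma (x - 1) := by
    simpa using Gamma_add_one hx₁.ne'
  simp only [Function.comp, hrec, log_mul hx₁.ne' hΓx₁.ne', add_sub_cancel_left, sub_sub_cancel,
    div_one, add_sub_cancel_right] at hslope
  rw [rpow_def_of_pos hx₁, ← exp_log (div_pos hΓxa hΓx), exp_le_exp, log_div hΓxa.ne' hΓx.ne',
    hrec, log_mul hx₁.ne' hΓx₁.ne']
  rw [le_div_iff₀ ha] at hslope
  linarith

theorem tendsto_Gamma_add_div_Gamma_atTop {a : ℝ} (ha : 0 < a) :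
    Tendsto (fun x => Gamma (x + a) / Gamma x) atTop atTop :=
  tendsto_atTop_mono' _
    ((eventually_gt_atTop 1).mono fun _ hx => rpow_le_Gamma_add_div_Gamma hx ha)
    ((tendsto_rpow_atTop ha).comp (tendsto_atTop_add_const_right _ (-1) tendsto_id))

end Real

section EntirePowerSeries

variable {a : ℕ → ℝ}

/-- Against the geometric decay of `(|x| / (|x| + 1)) ^ k`, the polynomial weight `k ^ j` is
eventually at most `1`, so convergence at `|x| + 1` controls the weighted series at `x`. -/
theorem summable_descFactorial_mul_abs (ha : ∀ r : ℝ, Summable fun k => a k * r ^ k) (j : ℕ)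
    (x : ℝ) : Summable fun k => (k.descFactorial j : ℝ) * |a k * x ^ k| := by
  set R := |x| + 1
  have hR : 0 < R := by positivity
  have hq : |(|x| / R)| < 1 := by
    rw [abs_of_nonneg (by positivity), div_lt_one hR]
    exact lt_add_one _
  refine (ha R).abs.of_norm_bounded_eventually_nat ?_
  filter_upwards [(tendsto_pow_const_mul_const_pow_of_abs_lt_one j hq).eventually_le_const
    one_pos] with k hk
  have hdesc : (k.descFactorial j : ℝ) ≤ (k : ℝ) ^ j := by exact_mod_cast k.descFactorial_le_pow j
  calc ‖(k.descFactorial j : ℝ) * |a k * x ^ k|‖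
      = (k.descFactorial j : ℝ) * (|x| / R) ^ k * |a k * R ^ k| := by
        rw [norm_of_nonneg (by positivity), abs_mul, abs_mul, abs_pow, abs_pow, abs_of_pos hR,
          div_pow]
        field_simp
    _ ≤ (k : ℝ) ^ j * (|x| / R) ^ k * |a k * R ^ k| := by gcongr
    _ ≤ 1 * |a k * R ^ k| := by gcongr
    _ = |a k * R ^ k| := one_mul _

theorem hasDerivAt_tsum_descFactorial_mul_pow (ha : ∀ r : ℝ, Summable fun k => a k * r ^ k)
    (j : ℕ) (x : ℝ) :
    HasDerivAt (fun y => ∑' k, (k.descFactorial j : ℝ) * a k * y ^ (k - j))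
      (∑' k, (k.descFactorial (j + 1) : ℝ) * a k * x ^ (k - (j + 1))) x := by
  set R := |x| + 1 with hR_def
  have hR : 1 ≤ R := le_add_of_nonneg_left (abs_nonneg x)
  have hterm : ∀ k y, HasDerivAt (fun y => (k.descFactorial j : ℝ) * a k * y ^ (k - j))
      ((k.descFactorial (j + 1) : ℝ) * a k * y ^ (k - (j + 1))) y := fun k y => by
    refine ((hasDerivAt_pow (k - j) y).const_mul _).congr_deriv ?_
    rw [Nat.descFactorial_succ, Nat.sub_sub, Nat.cast_mul]
    ring
  have hbound : ∀ k, ∀ y ∈ Set.Ioo (-R) R,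
      ‖(k.descFactorial (j + 1) : ℝ) * a k * y ^ (k - (j + 1))‖
        ≤ (k.descFactorial (j + 1) : ℝ) * |a k * R ^ k| := fun k y hy => by
    have hyR : |y| ≤ R := abs_le.2 ⟨hy.1.le, hy.2.le⟩
    rw [Real.norm_eq_abs, abs_mul, abs_mul, Nat.abs_cast, abs_mul, abs_pow, abs_pow,
      abs_of_nonneg (zero_le_one.trans hR), mul_assoc]
    gcongr
    calc |y| ^ (k - (j + 1)) ≤ R ^ (k - (j + 1)) := by gcongr
      _ ≤ R ^ k := pow_le_pow_right₀ hR (Nat.sub_le k (j + 1))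
  have hsummable_zero : Summable fun k => (k.descFactorial j : ℝ) * a k * (0 : ℝ) ^ (k - j) :=
    summable_of_ne_finset_zero (s := range (j + 1)) fun k hk => by
      rw [zero_pow (by rw [mem_range] at hk; omega), mul_zero]
  exact hasDerivAt_tsum_of_isPreconnected (summable_descFactorial_mul_abs ha (j + 1) R)
    isOpen_Ioo isPreconnected_Ioo (fun k y _ => hterm k y) hbound
    ⟨by linarith, by linarith⟩ hsummable_zero
    ⟨by linarith [neg_abs_le x], by linarith [le_abs_self x]⟩

theorem iteratedDeriv_tsum_mul_pow (ha : ∀ r : ℝ, Summable fun k => a k * r ^ k) (j : ℕ)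
    (x : ℝ) : iteratedDeriv j (fun y => ∑' k, a k * y ^ k) x
      = ∑' k, (k.descFactorial j : ℝ) * a k * x ^ (k - j) := by
  induction j generalizing x with
  | zero => simp
  | succ j ih =>
    rw [iteratedDeriv_succ, funext ih]
    exact (hasDerivAt_tsum_descFactorial_mul_pow ha j x).deriv

theorem pow_mul_iteratedDeriv_tsum_mul_pow (ha : ∀ r : ℝ, Summable fun k => a k * r ^ k)
    (j : ℕ) (x : ℝ) : x ^ j * iteratedDeriv j (fun y => ∑' k, a k * y ^ k) x
      = ∑' k, (k.descFactorial j : ℝ) * a k * x ^ k := by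
  rw [iteratedDeriv_tsum_mul_pow ha, ← tsum_mul_left]
  refine tsum_congr fun k => ?_
  rcases lt_or_ge k j with hkj | hjk
  · simp [Nat.descFactorial_of_lt hkj]
  · rw [← Nat.add_sub_of_le hjk, pow_add, Nat.add_sub_cancel_left]
    ring

theorem tsum_pow_mul_mul_pow_eq_sum_stirlingSecond
    (ha : ∀ r : ℝ, Summable fun k => a k * r ^ k) (n : ℕ) (x : ℝ) :
    ∑' k : ℕ, (k : ℝ) ^ n * a k * x ^ k = ∑ j ∈ range (n + 1),
      (Nat.stirlingSecond n j : ℝ) * x ^ j * iteratedDeriv j (fun y => ∑' k, a k * y ^ k) x := by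
  have hsummable : ∀ j, Summable fun k => (k.descFactorial j : ℝ) * a k * x ^ k := fun j =>
    .of_norm_bounded (summable_descFactorial_mul_abs ha j x) fun k => by
      rw [Real.norm_eq_abs, mul_assoc, abs_mul, Nat.abs_cast]
  simp_rw [mul_assoc _ (x ^ _), pow_mul_iteratedDeriv_tsum_mul_pow ha, ← tsum_mul_left,
    ← Summable.tsum_finsetSum fun j _ => (hsummable j).mul_left _]
  refine tsum_congr fun k => ?_
  rw [← Nat.cast_pow, ← Nat.sum_stirlingSecond_mul_descFactorial n k, Nat.cast_sum, sum_mul,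
    sum_mul]
  refine sum_congr rfl fun j _ => ?_
  push_cast
  ring

end EntirePowerSeries

theorem summable_pow_div_Gamma {α : ℝ} (hα : 0 < α) (β r : ℝ) :
    Summable fun k : ℕ => r ^ k / Gamma (β + α * k) := by
  have hx : Tendsto (fun k : ℕ => β + α * k) atTop atTop :=
    tendsto_atTop_add_const_left _ _ (tendsto_natCast_atTop_atTop.const_mul_atTop hα)
  refine summable_of_ratio_norm_eventually_le (r := 1 / 2) (by norm_num) ?_
  filter_upwards [hx.eventually ((tendsto_Gamma_add_div_Gamma_atTop hα).eventually_ge_atTop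
    (2 * |r|)), hx.eventually_gt_atTop 0] with k hratio hpos
  have hΓ := Gamma_pos_of_pos hpos
  have hΓα := Gamma_pos_of_pos (show 0 < β + α * k + α by linarith)
  rw [le_div_iff₀ hΓ] at hratio
  simp only [Nat.cast_succ, mul_add_one, ← add_assoc, norm_div, norm_pow, Real.norm_eq_abs,
    abs_of_pos hΓ, abs_of_pos hΓα]
  rw [div_le_iff₀ hΓα, pow_succ]
  calc |r| ^ k * |r| = 1 / 2 * (|r| ^ k / Gamma (β + α * k)) * (2 * |r| * Gamma (β + α * k)) := by
        field_simp
    _ ≤ 1 / 2 * (|r| ^ k / Gamma (β + α * k)) * Gamma (β + α * k + α) := by gcongr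

theorem mittagLeffler_eq_tsum (α β : ℝ) :
    mittagLeffler α β = fun x => ∑' k : ℕ, (Gamma (β + α * k))⁻¹ * x ^ k :=
  funext fun _ => tsum_congr fun _ => div_eq_inv_mul _ _

theorem genFracPoisson_raw_moment_general (n : ℕ) (α β lam : ℝ) (hα : 0 < α) :
    ∑' k : ℕ, (k : ℝ) ^ n * lam ^ k / (Real.Gamma (β + α * k) * mittagLeffler α β lam)
      = (1 / mittagLeffler α β lam)
        * ∑ j ∈ Finset.range (n + 1),
            (stirling2 n j : ℝ) * lam ^ j * iteratedDeriv j (mittagLeffler α β) lam := by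
  have hsummable : ∀ r : ℝ, Summable fun k : ℕ => (Gamma (β + α * k))⁻¹ * r ^ k := fun r =>
    (summable_pow_div_Gamma hα β r).congr fun _ => div_eq_inv_mul _ _
  simp_rw [stirling2_eq_stirlingSecond, mittagLeffler_eq_tsum α β,
    ← tsum_pow_mul_mul_pow_eq_sum_stirlingSecond hsummable, one_div_mul_eq_div, ← tsum_div_const]
  refine tsum_congr fun k => ?_
  rw [div_mul_eq_div_div]
  ring

theorem genFracPoisson_raw_moment (n : ℕ) (α β lam : ℝ) (hα : 0 < α) (hβ : 0 < β)
    (hlam : 0 < lam) :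
    ∑' k : ℕ, (k : ℝ) ^ n * lam ^ k / (Real.Gamma (β + α * k) * mittagLeffler α β lam)
      = (1 / mittagLeffler α β lam)
        * ∑ j ∈ Finset.range (n + 1),
            (stirling2 n j : ℝ) * lam ^ j * iteratedDeriv j (mittagLeffler α β) lam :=
  genFracPoisson_raw_moment_general n α β lam hα
end
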